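/- arXiv:1805.11691 — 2 statements merged into one kernel-verified Lean document; each statement's English description precedes it below -/
import Mathlib

section
/- A finite p-group G belongs to C₃ (i.e. ∑_{H ⊴ G} |H| ≤ 2|G|) if and only if G is cyclic. -/
/-!
Double counting the pairs `(N, x)` with `x ∈ N ⊴ G` gives
`∑_{N ⊴ G} |N| = ∑_{x ∈ G} #{N ⊴ G | x ∈ N}`. In a p-group every maximal subgroup is
normal, so an element whose normal closure is `G` lies in no maximal subgroup and hence
generates `G`.
Thus if `G` is not cyclic, every `x` lies in the two distinct normal subgroups `G` and `⟨x⟩ᴳ`,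
and the identity lies in the trivial subgroup as well, so the sum exceeds `2|G|`.
If `G` is cyclic, a subgroup is determined by its order, so the sum is at most
`σ(|G|) = σ(pⁿ) < 2pⁿ`.
-/

/-- The sum of the orders of all normal subgroups of `G`. -/
noncomputable def normalSum (G : Type*) [Group G] : ℕ :=
  ∑ᶠ (H : Subgroup G) (_ : H.Normal), Nat.card H

open Subgroup Finset

section
variable {G : Type*} [Group G]

lemma normalSum_eq_sum [Fintype (Subgroup G)] [DecidablePred fun H : Subgroup G => H.Normal] :
    normalSum G = ∑ H : Subgroup G with H.Normal, Nat.card H :=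
  finsum_cond_eq_sum_of_cond_iff _ (by simp)

lemma card_filter_mem_eq_natCard [Fintype G] (L : Subgroup G) [DecidablePred (· ∈ L)] :
    #{x | x ∈ L} = Nat.card L := by
  rw [Nat.card_eq_fintype_card, Fintype.card_subtype]

lemma Subgroup.eq_of_card_eq_of_isCyclic [Finite G] [IsCyclic G] {H K : Subgroup G}
    (h : Nat.card H = Nat.card K) : H = K := by
  classical
  let _ := Fintype.ofFinite G
  -- In a cyclic group there are at most `d` solutions of `x ^ d = 1`, and a subgroup of order `d`
  -- already supplies `d` of them.
  have eq_roots (L : Subgroup G) :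
      ({x | x ∈ L} : Finset G) = ({x | x ^ Nat.card L = 1} : Finset G) := by
    refine eq_of_subset_of_card_le (fun x hx => ?_) ?_
    · have hxL : x ∈ L := (mem_filter.1 hx).2
      simpa only [mem_filter, mem_univ, true_and, SubmonoidClass.coe_pow, OneMemClass.coe_one]
        using congrArg Subtype.val (pow_card_eq_one' (x := (⟨x, hxL⟩ : L)))
    · rw [card_filter_mem_eq_natCard]
      exact IsCyclic.card_pow_eq_one_le Nat.card_pos
  have : ({x | x ∈ H} : Finset G) = ({x | x ∈ K} : Finset G) := by
    rw [eq_roots H, eq_roots K, h]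
  ext x
  simpa using Finset.ext_iff.1 this x

lemma normalSum_le_sum_divisors [Finite G] [IsCyclic G] :
    normalSum G ≤ ∑ d ∈ (Nat.card G).divisors, d := by
  classical
  let _ := Fintype.ofFinite (Subgroup G)
  rw [normalSum_eq_sum]
  calc ∑ H : Subgroup G with H.Normal, Nat.card H
      ≤ ∑ H : Subgroup G, Nat.card H := sum_le_sum_of_subset (filter_subset _ _)
    _ = ∑ d ∈ univ.image fun H : Subgroup G => Nat.card H, d := by
        rw [sum_image fun _ _ _ _ => eq_of_card_eq_of_isCyclic]
    _ ≤ ∑ d ∈ (Nat.card G).divisors, d := by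
        refine sum_le_sum_of_subset fun d hd => ?_
        obtain ⟨H, -, rfl⟩ := mem_image.1 hd
        exact Nat.mem_divisors.2 ⟨H.card_subgroup_dvd_card, Nat.card_pos.ne'⟩

lemma zpowers_eq_top_of_normalClosure_eq_top [Finite G] (hG : NormalizerCondition G) {x : G}
    (hx : normalClosure {x} = ⊤) : zpowers x = ⊤ := by
  by_contra hne
  obtain ⟨M, hM, hxM⟩ := (eq_top_or_exists_le_coatom (zpowers x)).resolve_left hne
  have := hG.normal_of_coatom M hM
  refine hM.1 (top_le_iff.1 (hx ▸ normalClosure_le_normal ?_))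
  simpa using hxM (mem_zpowers x)

open scoped Classical in
lemma normalSum_eq_sum_card_normal_mem [Fintype G] [Fintype (Subgroup G)] :
    normalSum G = ∑ x : G, #{H : Subgroup G | H.Normal ∧ x ∈ H} := by
  simp_rw [normalSum_eq_sum, ← card_filter_mem_eq_natCard]
  exact (sum_card_bipartiteAbove_eq_sum_card_bipartiteBelow fun (H : Subgroup G) x => x ∈ H).trans
    (by simp [bipartiteBelow, filter_filter])

lemma two_mul_card_lt_normalSum [Finite G] (h : ∀ x : G, normalClosure {x} ≠ ⊤) :
    2 * Nat.card G < normalSum G := by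
  classical
  let _ := Fintype.ofFinite G
  let _ := Fintype.ofFinite (Subgroup G)
  let normalsAbove (x : G) : Finset (Subgroup G) := {H | H.Normal ∧ x ∈ H}
  have closure_one : normalClosure ({1} : Set G) = ⊥ := normalClosure_eq_bot_iff.2 subset_rfl
  obtain ⟨y, -, hy⟩ := SetLike.exists_of_lt (closure_one ▸ (h 1).lt_top)
  have mem_normalsAbove {x : G} {H : Subgroup G} [H.Normal] (hx : x ∈ H) : H ∈ normalsAbove x :=
    mem_filter.2 ⟨mem_univ H, inferInstance, hx⟩
  have two_le (x : G) : 2 ≤ #(normalsAbove x) := by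
    rw [← card_pair (h x)]
    refine card_le_card (insert_subset_iff.2 ⟨?_, singleton_subset_iff.2 ?_⟩)
    · exact mem_normalsAbove (subset_normalClosure (Set.mem_singleton x))
    · exact mem_normalsAbove (mem_top x)
  have three_le : 3 ≤ #(normalsAbove 1) := by
    have bot_ne_closure : ⊥ ≠ normalClosure {y} :=
      fun e => hy (e ▸ subset_normalClosure (Set.mem_singleton y))
    have bot_ne_top : (⊥ : Subgroup G) ≠ ⊤ := closure_one ▸ h 1
    rw [← card_eq_three.2 ⟨_, _, _, bot_ne_closure, bot_ne_top, h y, rfl⟩]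
    have one_mem_normal (H : Subgroup G) [H.Normal] : H ∈ normalsAbove 1 :=
      mem_normalsAbove H.one_mem
    refine card_le_card (insert_subset_iff.2 ⟨one_mem_normal _, insert_subset_iff.2
      ⟨one_mem_normal _, singleton_subset_iff.2 (one_mem_normal _)⟩⟩)
  calc 2 * Nat.card G < 3 + ∑ _x ∈ univ.erase 1, 2 := by
        rw [sum_const, card_erase_of_mem (mem_univ 1), card_univ, ← Nat.card_eq_fintype_card,
          smul_eq_mul]
        have := Nat.card_pos (α := G)
        omega
    _ ≤ #(normalsAbove 1) + ∑ x ∈ univ.erase 1, #(normalsAbove x) :=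
        add_le_add three_le (sum_le_sum fun x _ => two_le x)
    _ = normalSum G :=
        (add_sum_erase _ _ (mem_univ 1)).trans normalSum_eq_sum_card_normal_mem.symm

lemma normalSum_lt_two_mul_card_of_deficient [Finite G] [IsCyclic G]
    (hG : (Nat.card G).Deficient) : normalSum G < 2 * Nat.card G :=
  calc normalSum G ≤ ∑ d ∈ (Nat.card G).divisors, d := normalSum_le_sum_divisors
    _ = ∑ d ∈ (Nat.card G).properDivisors, d + Nat.card G :=
        Nat.sum_divisors_eq_sum_properDivisors_add_self
    _ < 2 * Nat.card G := by rw [Nat.Deficient] at hG; omega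

lemma isCyclic_of_normalSum_le [Finite G] (hG : NormalizerCondition G)
    (h : normalSum G ≤ 2 * Nat.card G) : IsCyclic G := by
  by_contra hnc
  refine (two_mul_card_lt_normalSum fun x hx => hnc ?_).not_ge h
  exact isCyclic_iff_exists_zpowers_eq_top.2 ⟨x, zpowers_eq_top_of_normalClosure_eq_top hG hx⟩

end

theorem pGroup_mem_C3_iff_cyclic (p : ℕ) (hp : p.Prime) (G : Type*) [Group G] [Finite G]
    (h : IsPGroup p G) :
    normalSum G ≤ 2 * Nat.card G ↔ IsCyclic G := by
  have : Fact p.Prime := ⟨hp⟩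
  have : Group.IsNilpotent G := h.isNilpotent
  refine ⟨isCyclic_of_normalSum_le Group.normalizerCondition_of_isNilpotent, fun _ => ?_⟩
  obtain ⟨n, hn⟩ := h.exists_card_eq
  exact (normalSum_lt_two_mul_card_of_deficient (hn ▸ hp.deficient_pow)).le
end

section
/- The dihedral group D_{2m} of order 2m belongs to C₃ (i.e. ∑_{H ⊴ D_{2m}} |H| ≤ 4m) if and only if m is odd and σ(m) ≤ 2m. -/
/-!
For odd `m`, a normal subgroup of `D_{2m}` containing a reflection `sr i` contains all of them,
since conjugation by `r j` sends `sr i` to `sr (i - 2j)` and `2` is invertible mod `m`; so it is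
the whole group. The other normal subgroups are exactly the subgroups of the cyclic rotation
subgroup `⟨r 1⟩` of order `m`, one of each order `d ∣ m`. Hence the orders of the normal
subgroups add up to `2m + σ(m)`. For even `m` the rotations and the kernel of
`r i, sr i ↦ i mod 2` are two distinct subgroups of index two, hence normal, and already
`1 + m + m + 2m > 4m`.
-/

open Subgroup

namespace Subgroup

theorem eq_zpowers_pow_of_le_zpowers {G : Type*} [Group G] {g : G} (hg : IsOfFinOrder g)
    {H : Subgroup G} (hH : H ≤ zpowers g) : H = zpowers (g ^ (orderOf g / Nat.card H)) := by
  set d := Nat.card H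
  have hdvd : d ∣ orderOf g := by simpa [Nat.card_zpowers] using card_dvd_of_le hH
  have hd : d ≠ 0 := ne_zero_of_dvd_ne_zero hg.orderOf_pos.ne' hdvd
  have hcard : Nat.card (zpowers (g ^ (orderOf g / d))) = d := by
    rw [Nat.card_zpowers, orderOf_pow_orderOf_div hg.orderOf_pos.ne' hdvd]
  have : Finite (zpowers (g ^ (orderOf g / d))) :=
    Nat.finite_of_card_ne_zero (by rw [hcard]; exact hd)
  refine eq_of_le_of_card_ge (fun x hx => ?_) hcard.le
  obtain ⟨k, rfl⟩ := mem_zpowers_iff.mp (hH hx)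
  have hkd : ((orderOf g / d * d : ℕ) : ℤ) ∣ k * d := by
    rw [Nat.div_mul_cancel hdvd, orderOf_dvd_iff_zpow_eq_one, zpow_mul, zpow_natCast]
    exact orderOf_dvd_iff_pow_eq_one.mp (H.orderOf_dvd_natCard hx)
  rw [Nat.cast_mul] at hkd
  obtain ⟨j, rfl⟩ := Int.dvd_of_mul_dvd_mul_right (by exact_mod_cast hd) hkd
  exact ⟨j, by simp only [← zpow_natCast, ← zpow_mul]⟩

theorem finsum_card_le_zpowers_eq_sum_divisors {G : Type*} [Group G] {g : G}
    (hg : IsOfFinOrder g) :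
    ∑ᶠ H ∈ {H : Subgroup G | H ≤ zpowers g}, Nat.card H = ∑ d ∈ (orderOf g).divisors, d := by
  have hn := hg.orderOf_pos.ne'
  rw [← finsum_mem_coe_finset]
  refine finsum_mem_eq_of_bijOn (fun H : Subgroup G => Nat.card H)
    ⟨fun H hH => ?_, fun H hH K hK hHK => ?_, fun d hd => ?_⟩ fun _ _ => rfl
  · simpa [Nat.card_zpowers, hn] using card_dvd_of_le hH
  · rw [eq_zpowers_pow_of_le_zpowers hg hH, eq_zpowers_pow_of_le_zpowers hg hK,
      show Nat.card H = Nat.card K from hHK]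
  · have hd : d ∣ orderOf g := Nat.dvd_of_mem_divisors hd
    refine ⟨zpowers (g ^ (orderOf g / d)), ?_, ?_⟩
    · exact zpowers_le.mpr (pow_mem (mem_zpowers g) _)
    · exact (Nat.card_zpowers _).trans (orderOf_pow_orderOf_div hn hd)

end Subgroup

theorem sum_card_le_normalSum {G : Type*} [Group G] [Finite G] {S : Finset (Subgroup G)}
    (hS : ∀ H ∈ S, H.Normal) : ∑ H ∈ S, Nat.card H ≤ normalSum G := by
  change _ ≤ ∑ᶠ H ∈ {H : Subgroup G | H.Normal}, Nat.card H
  rw [finsum_mem_eq_finite_toFinset_sum _ (Set.toFinite _)]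
  exact Finset.sum_le_sum_of_subset fun H hH => by simpa using hS H hH

theorem two_mul_card_lt_normalSum_s15 {G : Type*} [Group G] [Finite G] {H K : Subgroup G}
    (hHK : H ≠ K) (hH : H.index = 2) (hK : K.index = 2) : 2 * Nat.card G < normalSum G := by
  classical
  have hcardH := H.card_mul_index
  have hcardK := K.card_mul_index
  rw [hH] at hcardH
  rw [hK] at hcardK
  have hH_top : H ≠ ⊤ := by rintro rfl; simp at hH
  have hK_top : K ≠ ⊤ := by rintro rfl; simp at hK
  -- `H` and `K` have the same order, so neither can be `⊥` without the other being `⊥` too.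
  have hH_bot : H ≠ ⊥ := by
    rintro rfl
    exact hHK (card_eq_one.mp (by rw [card_bot] at hcardH; omega)).symm
  have hK_bot : K ≠ ⊥ := by
    rintro rfl
    exact hHK (card_eq_one.mp (by rw [card_bot] at hcardK; omega))
  have hbot_top : (⊥ : Subgroup G) ≠ ⊤ := fun h => hH_top (eq_top_iff.mpr (h ▸ bot_le))
  set S : Finset (Subgroup G) := {⊥, H, K, ⊤}
  have hsum : ∑ L ∈ S, Nat.card L = 2 * Nat.card G + 1 := by
    rw [Finset.sum_insert (by simp [hH_bot.symm, hK_bot.symm, hbot_top]),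
      Finset.sum_insert (by simp [hHK, hH_top]), Finset.sum_pair hK_top, card_bot, card_top]
    omega
  have hnormal : ∀ L ∈ S, L.Normal := by
    simp only [S, Finset.mem_insert, Finset.mem_singleton]
    rintro L (rfl | rfl | rfl | rfl)
    exacts [normal_bot, normal_of_index_eq_two hH, normal_of_index_eq_two hK, normal_top]
  calc 2 * Nat.card G < ∑ L ∈ S, Nat.card L := by omega
    _ ≤ normalSum G := sum_card_le_normalSum hnormal

namespace DihedralGroup

variable {n : ℕ}

theorem r_mem_zpowers_r_one (i : ZMod n) : r i ∈ zpowers (r 1 : DihedralGroup n) :=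
  ⟨i.cast, by simp only [r_one_zpow, ZMod.intCast_zmod_cast]⟩

theorem sr_notMem_zpowers_r_one (i : ZMod n) : sr i ∉ zpowers (r 1 : DihedralGroup n) := by
  rintro ⟨k, hk⟩
  simp only [r_one_zpow] at hk
  cases hk

theorem normal_of_le_zpowers_r_one {H : Subgroup (DihedralGroup n)} (hH : H ≤ zpowers (r 1)) :
    H.Normal := by
  refine ⟨fun x hx g => ?_⟩
  rcases x with i | i
  · rcases g with j | j
    · simpa [r_mul_r, inv_r] using hx
    · have hconj : sr j * r i * (sr j)⁻¹ = (r i)⁻¹ := by simp [sr_mul_r, sr_mul_sr, inv_r]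
      exact hconj ▸ H.inv_mem hx
  · exact absurd (hH hx) (sr_notMem_zpowers_r_one i)

theorem eq_top_of_sr_mem (hn : Odd n) {H : Subgroup (DihedralGroup n)} [hH : H.Normal]
    {i : ZMod n} (hi : sr i ∈ H) : H = ⊤ := by
  have h2 : IsUnit (2 : ZMod n) := by
    simpa using (ZMod.isUnit_iff_coprime 2 n).mpr (Nat.coprime_two_left.mpr hn)
  have hsr : ∀ k, sr k ∈ H := by
    intro k
    have hconj := hH.conj_mem _ hi (r (h2.unit⁻¹ * (i - k)))
    convert hconj using 1
    simp only [r_mul_sr, sr_mul_r, inv_r, sr.injEq]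
    linear_combination (i - k) * h2.mul_val_inv
  refine eq_top_iff.mpr fun x _ => ?_
  rcases x with t | t
  · simpa [sr_mul_sr] using H.mul_mem (hsr 0) (hsr t)
  · exact hsr t

theorem normal_iff_eq_top_or_le_zpowers_r_one (hn : Odd n) {H : Subgroup (DihedralGroup n)} :
    H.Normal ↔ H = ⊤ ∨ H ≤ zpowers (r 1) := by
  refine ⟨fun hH => ?_, ?_⟩
  · by_cases h : ∃ i, sr i ∈ H
    · obtain ⟨i, hi⟩ := h
      exact .inl (eq_top_of_sr_mem hn hi)
    · simp only [not_exists] at h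
      refine .inr fun x hx => ?_
      rcases x with i | i
      exacts [r_mem_zpowers_r_one i, absurd hx (h i)]
  · rintro (rfl | hH)
    exacts [normal_top, normal_of_le_zpowers_r_one hH]

theorem normalSum_of_odd (hn : Odd n) :
    normalSum (DihedralGroup n) = 2 * n + ∑ d ∈ n.divisors, d := by
  have : NeZero n := ⟨hn.pos.ne'⟩
  have hnormal : {H : Subgroup (DihedralGroup n) | H.Normal} = insert ⊤ {H | H ≤ zpowers (r 1)} :=
    Set.ext fun H => normal_iff_eq_top_or_le_zpowers_r_one hn
  have htop : ⊤ ∉ {H : Subgroup (DihedralGroup n) | H ≤ zpowers (r 1)} :=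
    fun h => sr_notMem_zpowers_r_one 0 (h (mem_top _))
  change ∑ᶠ H ∈ {H : Subgroup (DihedralGroup n) | H.Normal}, Nat.card H = _
  rw [hnormal, finsum_mem_insert _ htop (Set.toFinite _), card_top, nat_card,
    finsum_card_le_zpowers_eq_sum_divisors (isOfFinOrder_of_finite _), orderOf_r_one]

def parityHom (h : 2 ∣ n) : DihedralGroup n →* Multiplicative (ZMod 2) where
  toFun
    | r i => .ofAdd (ZMod.castHom h (ZMod 2) i)
    | sr i => .ofAdd (ZMod.castHom h (ZMod 2) i)
  map_one' := congrArg Multiplicative.ofAdd (map_zero _)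
  map_mul' := by
    rintro (i | i) (j | j) <;>
      simp only [r_mul_r, r_mul_sr, sr_mul_r, sr_mul_sr, ← ofAdd_add, map_add, map_sub] <;>
      congr 1 <;> rw [sub_eq_add_neg, CharTwo.neg_eq] <;> ring

theorem index_ker_parityHom (h : 2 ∣ n) : (parityHom h).ker.index = 2 := by
  have hsurj : Function.Surjective (parityHom h) := fun y => by
    obtain ⟨i, hi⟩ := ZMod.castHom_surjective h (Multiplicative.toAdd y)
    exact ⟨r i, congrArg Multiplicative.ofAdd hi⟩
  rw [index_ker, MonoidHom.range_eq_top.mpr hsurj, card_top]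
  simp

theorem index_zpowers_r_one [NeZero n] : (zpowers (r 1 : DihedralGroup n)).index = 2 := by
  have h := (zpowers (r 1 : DihedralGroup n)).card_mul_index
  rw [Nat.card_zpowers, orderOf_r_one, nat_card, mul_comm] at h
  exact Nat.eq_of_mul_eq_mul_right (NeZero.pos n) h

theorem two_mul_card_lt_normalSum_of_even [NeZero n] (hn : Even n) :
    2 * Nat.card (DihedralGroup n) < normalSum (DihedralGroup n) := by
  have hsr : sr 0 ∈ (parityHom hn.two_dvd).ker := by simp [parityHom]
  have hne : zpowers (r 1) ≠ (parityHom hn.two_dvd).ker :=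
    fun h => sr_notMem_zpowers_r_one 0 (h ▸ hsr)
  exact two_mul_card_lt_normalSum_s15 hne index_zpowers_r_one (index_ker_parityHom hn.two_dvd)

end DihedralGroup

theorem dihedral_mem_C3_iff (m : ℕ) (hm : 3 ≤ m) :
    normalSum (DihedralGroup m) ≤ 2 * Nat.card (DihedralGroup m) ↔
      Odd m ∧ (∑ d ∈ m.divisors, d) ≤ 2 * m := by
  rcases Nat.even_or_odd m with hm2 | hm2
  · have : NeZero m := ⟨by omega⟩
    exact iff_of_false (DihedralGroup.two_mul_card_lt_normalSum_of_even hm2).not_ge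
      fun h => Nat.not_odd_iff_even.mpr hm2 h.1
  · rw [DihedralGroup.normalSum_of_odd hm2, DihedralGroup.nat_card]
    simp only [hm2, true_and]
    omega
end
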